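/- Let 0 = τ₀ < τ₁ < … < τ_T < τ_{T+1} = 1 be ordered quantile levels and set ε = max_{t=1,…,T+1} (τ_t − τ_{t−1}). Suppose F and G are distribution functions on [0,1] and there exist points y₁ ≤ … ≤ y_T in [0,1] such that F(y_t) = G(y_t) = τ_t for every t = 1, …, T. Then d_L(F, G) ≤ ε. -/

import Mathlib

open MeasureTheory Filter Set

/-- A distribution function on `[0,1]`: nondecreasing, right-continuous, with values in `[0,1]`,
equal to `0` below `0` and equal to `1` from `1` on. -/
def IsDistFunOn01 (F : ℝ → ℝ) : Prop :=
  Monotone F ∧ (∀ y : ℝ, ContinuousWithinAt F (Set.Ici y) y) ∧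
    (∀ y : ℝ, F y ∈ Set.Icc (0 : ℝ) 1) ∧ (∀ y : ℝ, y < 0 → F y = 0) ∧
    (∀ y : ℝ, 1 ≤ y → F y = 1)

/-- The Lévy distance between two (distribution) functions:
`d_L(F,G) = inf {ε > 0 : F(y − ε) − ε ≤ G(y) ≤ F(y + ε) + ε for all y}`. -/
noncomputable def levyDist (F G : ℝ → ℝ) : ℝ :=
  sInf {ε : ℝ | 0 < ε ∧ ∀ y : ℝ, F (y - ε) - ε ≤ G y ∧ G y ≤ F (y + ε) + ε}

/-!
Every `z` lies in a cell `[y t, y (t + 1))` of the shared grid, with `y 0 = -∞` and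
`y (T + 1) = +∞`. Since `F` and `G` are nondecreasing and take the values `τ t` at the grid
points (and values in `[0, 1] = [τ 0, τ (T + 1)]` everywhere), both `F z` and `G z` lie in
`[τ t, τ (t + 1)]`, so `|F z - G z| ≤ ε`. The Lévy distance is bounded by this uniform distance.
-/

lemma levyDist_le_of_abs_sub_le {F G : ℝ → ℝ} (hF : Monotone F) {ε : ℝ} (hε : 0 < ε)
    (hFG : ∀ z, |F z - G z| ≤ ε) : levyDist F G ≤ ε := by
  refine csInf_le ⟨0, fun _ h => h.1.le⟩ ⟨hε, fun z => ⟨?_, ?_⟩⟩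
  · have := hF (show z - ε ≤ z by linarith)
    linarith [(abs_le.mp (hFG z)).2]
  · have := hF (show z ≤ z + ε by linarith)
    linarith [(abs_le.mp (hFG z)).1]

/-- Index `0` plays the role of a grid point at `-∞`. -/
noncomputable def gridIndex (y : ℕ → ℝ) (T : ℕ) (z : ℝ) : ℕ :=
  Nat.findGreatest (fun t => t = 0 ∨ y t ≤ z) T

lemma gridIndex_le (y : ℕ → ℝ) (T : ℕ) (z : ℝ) : gridIndex y T z ≤ T :=
  Nat.findGreatest_le T

section Grid

variable {T : ℕ} {τ : ℕ → ℝ} {F : ℝ → ℝ} {y : ℕ → ℝ}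

lemma le_apply_of_gridIndex (hτ0 : τ 0 = 0) (hF : Monotone F) (hF0 : ∀ z, 0 ≤ F z)
    (hFy : ∀ t, 1 ≤ t → t ≤ T → F (y t) = τ t) (z : ℝ) :
    τ (gridIndex y T z) ≤ F z := by
  rcases Nat.eq_zero_or_pos (gridIndex y T z) with h0 | hpos
  · rw [h0, hτ0]
    exact hF0 z
  · have hle : y (gridIndex y T z) ≤ z :=
      (Nat.findGreatest_of_ne_zero rfl hpos.ne').resolve_left hpos.ne'
    rw [← hFy _ hpos (gridIndex_le y T z)]
    exact hF hle

lemma apply_le_of_gridIndex (hτlast : τ (T + 1) = 1) (hF : Monotone F) (hF1 : ∀ z, F z ≤ 1)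
    (hFy : ∀ t, 1 ≤ t → t ≤ T → F (y t) = τ t) (z : ℝ) :
    F z ≤ τ (gridIndex y T z + 1) := by
  rcases (gridIndex_le y T z).eq_or_lt with hT | hlt
  · rw [hT, hτlast]
    exact hF1 z
  · have hnext : ¬ (gridIndex y T z + 1 = 0 ∨ y (gridIndex y T z + 1) ≤ z) :=
      Nat.findGreatest_is_greatest (Nat.lt_succ_self _) hlt
    rw [← hFy _ (Nat.succ_pos _) hlt]
    exact hF (not_le.mp (not_or.mp hnext).2).le

lemma mem_Icc_of_gridIndex (hτ0 : τ 0 = 0) (hτlast : τ (T + 1) = 1) (hF : IsDistFunOn01 F)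
    (hFy : ∀ t, 1 ≤ t → t ≤ T → F (y t) = τ t) (z : ℝ) :
    F z ∈ Icc (τ (gridIndex y T z)) (τ (gridIndex y T z + 1)) :=
  ⟨le_apply_of_gridIndex hτ0 hF.1 (fun z => (hF.2.2.1 z).1) hFy z,
    apply_le_of_gridIndex hτlast hF.1 (fun z => (hF.2.2.1 z).2) hFy z⟩

end Grid

lemma sub_le_sup'_of_succ {T : ℕ} (τ : ℕ → ℝ) {t : ℕ} (ht : t ≤ T)
    (hne : (Finset.Icc 1 (T + 1)).Nonempty) :
    τ (t + 1) - τ t ≤ (Finset.Icc 1 (T + 1)).sup' hne (fun t => τ t - τ (t - 1)) :=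
  Finset.le_sup' (fun t => τ t - τ (t - 1)) (Finset.mem_Icc.mpr ⟨by omega, by omega⟩)

/-- If two distribution functions on `[0,1]` agree at points realizing a common grid of
quantile levels `0 = τ₀ < τ₁ < ⋯ < τ_T < τ_{T+1} = 1`, then their Lévy distance is at most
the largest gap `ε = max_{t=1,…,T+1} (τ_t − τ_{t−1})`. -/
theorem levyDist_le_of_shared_quantiles
    (T : ℕ) (τ : ℕ → ℝ)
    (hτ0 : τ 0 = 0) (hτlast : τ (T + 1) = 1)
    (hτmono : ∀ t, t ≤ T → τ t < τ (t + 1))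
    (ε : ℝ)
    (hε : ε = (Finset.Icc 1 (T + 1)).sup'
      (Finset.nonempty_Icc.mpr (by omega)) (fun t => τ t - τ (t - 1)))
    (F G : ℝ → ℝ) (hF : IsDistFunOn01 F) (hG : IsDistFunOn01 G)
    (y : ℕ → ℝ)
    (hFy : ∀ t, 1 ≤ t → t ≤ T → F (y t) = τ t)
    (hGy : ∀ t, 1 ≤ t → t ≤ T → G (y t) = τ t) :
    levyDist F G ≤ ε := by
  have hgap : ∀ t, t ≤ T → τ (t + 1) - τ t ≤ ε := fun t ht =>
    hε ▸ sub_le_sup'_of_succ τ ht _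
  have hεpos : 0 < ε := by
    linarith [hgap 0 (Nat.zero_le T), hτmono 0 (Nat.zero_le T)]
  refine levyDist_le_of_abs_sub_le hF.1 hεpos fun z => ?_
  have hFz := mem_Icc_of_gridIndex hτ0 hτlast hF hFy z
  have hGz := mem_Icc_of_gridIndex hτ0 hτlast hG hGy z
  have hcell := hgap _ (gridIndex_le y T z)
  rw [abs_le]
  constructor <;> linarith [hFz.1, hFz.2, hGz.1, hGz.2, hcell]
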